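/- Let (L, R, d) be a Reynolds LieDer pair over a field k and (V; ρ, R_V, d_V) a representation of it. For every n ≥ 1 and every alternating n-multilinear map f : Λⁿ L → V, one has φ(Δ f) = Δ(φ f), where (Δ f)(x_1,…,x_n) = Σ_{i=1}^n f(x_1,…,d x_i,…,x_n) − d_V(f(x_1,…,x_n)) and (φ f)(x_1,…,x_n) = f(R x_1,…,R x_n) − R_V(Σ_{i=1}^n f(R x_1,…,x_i,…,R x_n)) + (n−1) R_V f(R x_1,…,R x_n). -/
import Mathlib


namespace ReynoldsLieDer

variable {k L V : Type*} [Field k] [LieRing L] [LieAlgebra k L]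
  [AddCommGroup V] [Module k V]

/-- Chevalley–Eilenberg-type coboundary operator determined by an action-like map `rh`
and a bracket-like map `br`, acting on plain `m`-cochains `(Fin m → L) → V`:
`(δ f)(x₁,…,x_{m+1}) = Σᵢ (-1)^{i+m} rh(xᵢ) f(x₁,…,x̂ᵢ,…,x_{m+1})
  + Σ_{i<j} (-1)^{i+j+m+1} f(br(xᵢ,xⱼ), x₁,…,x̂ᵢ,…,x̂ⱼ,…,x_{m+1})`
(1-indexed, as in the paper; here the indices are 0-based). -/
def cobound (rh : L → V → V) (br : L → L → L) :
    (m : ℕ) → ((Fin m → L) → V) → (Fin (m + 1) → L) → V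
  | 0, f, x => - rh (x 0) (f fun j => j.elim0)
  | n + 1, f, x =>
      (∑ i : Fin (n + 2), ((-1 : ℤ) ^ ((i : ℕ) + n)) • rh (x i) (f fun l => x (i.succAbove l)))
        + ∑ i : Fin (n + 2), ∑ j : Fin (n + 1),
            if (i : ℕ) ≤ (j : ℕ) then
              ((-1 : ℤ) ^ ((i : ℕ) + (j : ℕ) + n + 1)) •
                f (Fin.cons (br (x i) (x (i.succAbove j)))
                    fun l : Fin n => x (i.succAbove (j.succAbove l)))
            else 0

/-- The map `φ` from Chevalley–Eilenberg cochains to cochains of the Reynolds operator: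
`(φ f)(x₁,…,x_m) = f(R x₁,…,R x_m) - R_V (Σᵢ f(R x₁,…,xᵢ,…,R x_m))
  + (m-1) R_V f(R x₁,…,R x_m)` for `m ≥ 1`, and `φ = id` for `m = 0`. -/
def phimap (Rm : L → L) (RV : V → V) :
    (m : ℕ) → ((Fin m → L) → V) → (Fin m → L) → V
  | 0, f => f
  | n + 1, f => fun x =>
      f (fun i => Rm (x i))
        - RV (∑ i : Fin (n + 1), f fun j => if j = i then x j else Rm (x j))
        + n • RV (f fun i => Rm (x i))

/-- The operator `Δ` induced by a pair of derivations:
`(Δ f)(x₁,…,x_m) = Σᵢ f(x₁,…,d xᵢ,…,x_m) - d_V (f(x₁,…,x_m))`. -/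
def deltamap (dm : L → L) (dV : V → V) {m : ℕ} (f : (Fin m → L) → V) :
    (Fin m → L) → V :=
  fun x => (∑ i : Fin m, f (Function.update x i (dm (x i)))) - dV (f x)

/-- The bracket `[x, y]_R := [x, R y] + [R x, y] - [R x, R y]` induced by a Reynolds
operator. -/
def brR (R : L →ₗ[k] L) (x y : L) : L := ⁅x, R y⁆ + ⁅R x, y⁆ - ⁅R x, R y⁆

/-- The induced action `ρ_R(x)u := ρ(R x)u + R_V(ρ(R x)u - ρ(x)u)`. -/
def rhoR (R : L →ₗ[k] L) (ρ : L →ₗ[k] Module.End k V) (RV : V →ₗ[k] V)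
    (x : L) (v : V) : V :=
  ρ (R x) v + RV (ρ (R x) v - ρ x v)


private theorem phi_delta_comm_aux
    (R : L →ₗ[k] L)
    (d : L →ₗ[k] L)
    (hRd : ∀ x : L, R (d x) = d (R x))
    (RV : V →ₗ[k] V)
    (dV : V →ₗ[k] V)
    (hRVdV : ∀ u : V, RV (dV u) = dV (RV u)) :
    ∀ (n : ℕ) (f : (Fin (n + 1) → L) → V),
      phimap (fun x => R x) (fun v => RV v) (n + 1)
          (deltamap (fun x => d x) (fun v => dV v) f)
        = deltamap (fun x => d x) (fun v => dV v)
            (phimap (fun x => R x) (fun v => RV v) (n + 1) f) := by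
  intro n f
  funext x
  simp only [phimap, deltamap]
  have hA : ∀ i : Fin (n+1),
      (fun j => R (Function.update x i (d (x i)) j))
        = Function.update (fun j => R (x j)) i (d (R (x i))) := by
    intro i; funext j
    rcases eq_or_ne j i with rfl | h
    · simp [hRd]
    · simp [Function.update_of_ne h]
  have hB : ∀ i j : Fin (n+1),
      (fun j' => if j' = j then Function.update x i (d (x i)) j'
          else R (Function.update x i (d (x i)) j'))
        = Function.update (fun j' => if j' = j then x j' else R (x j')) i
            (d (if i = j then x i else R (x i))) := by
    intro i j; funext j'
    rcases eq_or_ne j' i with rfl | h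
    · rcases eq_or_ne j' j with rfl | h2
      · simp
      · simp [h2, hRd]
    · rcases eq_or_ne j' j with rfl | h2
      · simp [Function.update_of_ne h, h]
      · simp [Function.update_of_ne h, h2]
  simp only [hA, hB, map_sub, map_add, map_sum, map_nsmul, hRVdV,
    Finset.sum_sub_distrib, Finset.sum_add_distrib, smul_sub, Finset.smul_sum]
  rw [Finset.sum_comm (s := Finset.univ) (t := Finset.univ)
    (f := fun i j => RV (f (Function.update
      (fun j' => if j' = j then x j' else R (x j')) i
      (d (if i = j then x i else R (x i))))))]
  abel

/-- For a Reynolds LieDer pair `(L, R, d)` with representation `(V; ρ, R_V, d_V)`,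
the maps `φ` and `Δ` commute on alternating `n`-cochains (`n ≥ 1`; here the cochain
degree is `n + 1`): `φ (Δ f) = Δ (φ f)`. -/
theorem phi_delta_comm
    (R : L →ₗ[k] L)
    (hR : ∀ x y : L, ⁅R x, R y⁆ = R (⁅R x, y⁆ + ⁅x, R y⁆ - ⁅R x, R y⁆))
    (d : L →ₗ[k] L)
    (hd : ∀ x y : L, d ⁅x, y⁆ = ⁅d x, y⁆ + ⁅x, d y⁆)
    (hRd : ∀ x : L, R (d x) = d (R x))
    (ρ : L →ₗ[k] Module.End k V)
    (hρ : ∀ (x y : L) (v : V), ρ ⁅x, y⁆ v = ρ x (ρ y v) - ρ y (ρ x v))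
    (RV : V →ₗ[k] V)
    (hRV : ∀ (x : L) (u : V),
      ρ (R x) (RV u) = RV (ρ (R x) u + ρ x (RV u) - ρ (R x) (RV u)))
    (dV : V →ₗ[k] V)
    (hdV : ∀ (x : L) (u : V), dV (ρ x u) = ρ (d x) u + ρ x (dV u))
    (hRVdV : ∀ u : V, RV (dV u) = dV (RV u)) :
    ∀ (n : ℕ) (f : AlternatingMap k L V (Fin (n + 1))),
      phimap (fun x => R x) (fun v => RV v) (n + 1)
          (deltamap (fun x => d x) (fun v => dV v) ⇑f)
        = deltamap (fun x => d x) (fun v => dV v)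
            (phimap (fun x => R x) (fun v => RV v) (n + 1) ⇑f) :=
  fun n f => phi_delta_comm_aux R d hRd RV dV hRVdV n ⇑f

end ReynoldsLieDer
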